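/- Consider a two-sender instance over a finite field F with parts P_1, P_2, P_{12}, side-information sets K_i, and eavesdropper set A with A_T = A ∩ P_T. Assume the interactions between P_1 and P_{12} are fully participated in both directions: P_{12} ⊆ K_i for every i ∈ P_1, and P_1 ⊆ K_j for every j ∈ P_{12}. Suppose for each T ∈ {1, 2, {1,2}} there exists a matrix G_T ∈ F^{l_T×|P_T|} that is a valid index code for the sub-instance induced on P_T and weakly secure against A_T. Then the code in which sender 1 transmits the symbolwise sum of G_1x^{(1)} and G_{12}x^{(12)} (the shorter codeword zero-padded to length max{l_1, l_{12}}) and sender 2 transmits G_2x^{(2)} is a valid weakly secure two-sender linear index code for the full instance of total length max{l_{12}, l_1} + l_2. In particular l* ≤ max{l*_{12}, l*_1} + l*_2. -/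

import Mathlib

open Matrix Sum

attribute [local instance] Classical.propDecidable

noncomputable section

variable (F : Type*) [Field F] [Fintype F]

/-- The row space of a matrix: the span of its rows. -/
def rowSpace {ρ ι : Type*} (G : Matrix ρ ι F) : Submodule F (ι → F) :=
  Submodule.span F (Set.range fun r j => G r j)

/-- Weak security of the linear code `x ↦ G x` against an eavesdropper knowing `x j` for
`j ∈ A`: for every `i ∉ A` and every `u` supported in `A`, `u + e i` is not in the
row space of `G`. -/
def WeaklySecure {ρ ι : Type*} (G : Matrix ρ ι F) (A : Set ι) : Prop :=
  ∀ i ∉ A, ∀ u : ι → F, (∀ j, u j ≠ 0 → j ∈ A) →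
    u + Pi.single i (1 : F) ∉ rowSpace F G

/-- `G` is a valid index code for side-information sets `K`: every receiver `i` can
decode `x i` from the codeword `G.mulVec x` and its side information `x|_{K i}`. -/
def ValidCode {ρ ι : Type*} [Fintype ι] (K : ι → Set ι) (G : Matrix ρ ι F) : Prop :=
  ∀ i : ι, ∃ D : (ρ → F) → (↥(K i) → F) → F,
    ∀ x : ι → F, D (G.mulVec x) (fun j => x j.1) = x i

/-- `G` has two-sender form for the parts `P1`, `P2`: its rows split into sender-1 rows,
zero on all columns in `P2`, and sender-2 rows, zero on all columns in `P1`. -/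
def TwoSenderForm {ρ ι : Type*} (P1 P2 : Set ι) (G : Matrix ρ ι F) : Prop :=
  ∃ S : Set ρ, (∀ r ∈ S, ∀ j ∈ P2, G r j = 0) ∧ (∀ r ∉ S, ∀ j ∈ P1, G r j = 0)

/-- Achievable lengths of valid weakly secure (single-sender) linear index codes. -/
def oneLens {ι : Type*} [Fintype ι] (K : ι → Set ι) (A : Set ι) : Set ℕ :=
  {l | ∃ G : Matrix (Fin l) ι F, ValidCode F K G ∧ WeaklySecure F G A}

/-- Achievable total lengths of valid weakly secure two-sender linear index codes. -/
def twoLens {ι : Type*} [Fintype ι] (P1 P2 : Set ι) (K : ι → Set ι) (A : Set ι) :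
    Set ℕ :=
  {l | ∃ G : Matrix (Fin l) ι F,
      TwoSenderForm F P1 P2 G ∧ ValidCode F K G ∧ WeaklySecure F G A}

/-- Side-information sets of the sub-instance induced on `S`. -/
def subK {ι : Type*} (K : ι → Set ι) (S : Set ι) : ↥S → Set ↥S :=
  fun i => {j : ↥S | (j : ι) ∈ K (i : ι)}

/-- Extend a matrix with columns indexed by `↥S` to one with columns indexed by `ι`,
filling the new columns with zeros. -/
def extendCols {ρ ι : Type*} (S : Set ι) (G : Matrix ρ ↥S F) : Matrix ρ ι F :=
  Matrix.of fun r => Function.extend (Subtype.val) (G r) (fun _ => 0)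

/-- Zero-pad a matrix with `l` rows to one with `L` rows. -/
def padMat {ι : Type*} (L : ℕ) {l : ℕ} (G : Matrix (Fin l) ι F) : Matrix (Fin L) ι F :=
  Matrix.of fun r j => if h : (r : ℕ) < l then G ⟨(r : ℕ), h⟩ j else 0

/-! A receiver in `P1` has all of `x⁽¹²⁾` as side information, so it can compute `G12 x⁽¹²⁾`,
subtract it from sender 1's transmission to obtain `G1 x⁽¹⁾`, and then decode as in the
sub-instance on `P1`; receivers in `P12` do the same with the roles exchanged, and receivers in
`P2` only listen to sender 2. For weak security, restricting the row space of the combined code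
to the coordinates of `P_T` lands in the row space of `G_T`, because the other blocks vanish on
`P_T` by disjointness; a vector `u + e i` with `i ∈ P_T` in the row space would therefore restrict
to one for `G_T`. -/

section

omit [Fintype F]

variable {F}

section Blocks

variable {ι ρ : Type*}

def padVec {α : Type*} [Zero α] (L : ℕ) {l : ℕ} (v : Fin l → α) : Fin L → α :=
  fun r => if h : (r : ℕ) < l then v ⟨r, h⟩ else 0

lemma padVec_castLE {α : Type*} [Zero α] {l L : ℕ} (hl : l ≤ L) (v : Fin l → α) (r : Fin l) :
    padVec L v (Fin.castLE hl r) = v r := by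
  simp [padVec]

lemma extendCols_apply_of_mem {S : Set ι} (M : Matrix ρ S F) (r : ρ) {j : ι} (hj : j ∈ S) :
    extendCols F S M r j = M r ⟨j, hj⟩ :=
  Subtype.val_injective.extend_apply (M r) (fun _ => 0) ⟨j, hj⟩

lemma extendCols_apply_of_notMem {S : Set ι} (M : Matrix ρ S F) (r : ρ) {j : ι} (hj : j ∉ S) :
    extendCols F S M r j = 0 :=
  Function.extend_apply' (M r) (fun _ => 0) j fun ⟨a, ha⟩ => hj (ha ▸ a.2)

lemma extendCols_submatrix_val (S : Set ι) (M : Matrix ρ S F) :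
    (extendCols F S M).submatrix id ((↑) : S → ι) = M := by
  ext r j
  exact extendCols_apply_of_mem M r j.2

lemma extendCols_submatrix_of_disjoint {S T : Set ι} (hST : Disjoint S T) (M : Matrix ρ S F) :
    (extendCols F S M).submatrix id ((↑) : T → ι) = 0 := by
  ext r j
  exact extendCols_apply_of_notMem M r (hST.notMem_of_mem_right j.2)

lemma extendCols_mulVec [Fintype ι] (S : Set ι) (M : Matrix ρ S F) (x : ι → F) :
    extendCols F S M *ᵥ x = M *ᵥ S.domRestrict x := by
  ext r
  refine (Fintype.sum_of_injective _ Subtype.val_injective _ _ ?_ fun j => ?_).symm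
  · rintro j hj
    dsimp only
    rw [extendCols_apply_of_notMem M r fun h => hj ⟨⟨j, h⟩, rfl⟩, zero_mul]
  · dsimp only
    rw [extendCols_apply_of_mem M r j.2]
    rfl

lemma padMat_mulVec [Fintype ι] (L : ℕ) {l : ℕ} (M : Matrix (Fin l) ι F) (x : ι → F) :
    padMat F L M *ᵥ x = padVec L (M *ᵥ x) := by
  ext r
  by_cases h : (r : ℕ) < l <;> simp [padMat, padVec, mulVec, dotProduct, h]

@[simp]
lemma padMat_zero (L l : ℕ) : padMat F L (0 : Matrix (Fin l) ι F) = 0 := by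
  ext r j
  simp [padMat]

end Blocks

section RowSpace

variable {ι ρ σ κ : Type*}

lemma rowSpace_fromRows (A : Matrix ρ ι F) (B : Matrix σ ι F) :
    rowSpace F (fromRows A B) = rowSpace F A ⊔ rowSpace F B := by
  rw [rowSpace, rowSpace, rowSpace, ← Submodule.span_union, ← Set.Sum.elim_range]
  congr 2

@[simp]
lemma rowSpace_zero : rowSpace F (0 : Matrix ρ ι F) = ⊥ :=
  Submodule.span_eq_bot.2 fun _ ⟨_, hr⟩ => hr ▸ rfl

lemma rowSpace_padMat_le (L : ℕ) {l : ℕ} (M : Matrix (Fin l) ι F) :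
    rowSpace F (padMat F L M) ≤ rowSpace F M := by
  refine Submodule.span_le.2 ?_
  rintro _ ⟨r, rfl⟩
  by_cases h : (r : ℕ) < l
  · exact Submodule.subset_span ⟨⟨r, h⟩, by ext j; simp [padMat, h]⟩
  · have hzero : (fun j => padMat F L M r j) = 0 := by
      ext j
      simp [padMat, h]
    simp only [SetLike.mem_coe, hzero, zero_mem]

lemma rowSpace_submatrix_le (G : Matrix ρ ι F) (f : σ → ρ) :
    rowSpace F (G.submatrix f id) ≤ rowSpace F G :=
  Submodule.span_mono (Set.range_comp_subset_range f _)

lemma map_funLeft_rowSpace (G : Matrix ρ ι F) (f : κ → ι) :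
    (rowSpace F G).map (LinearMap.funLeft F F f) = rowSpace F (G.submatrix id f) := by
  rw [rowSpace, Submodule.map_span, ← Set.range_comp]
  rfl

lemma WeaklySecure.mono {G : Matrix ρ ι F} {G' : Matrix σ ι F} {A : Set ι}
    (h : WeaklySecure F G A) (hle : rowSpace F G' ≤ rowSpace F G) : WeaklySecure F G' A :=
  fun i hi u hu hmem => h i hi u hu (hle hmem)

lemma add_single_notMem_rowSpace_of_map_le {G : Matrix ρ ι F} {A S : Set ι}
    {H : Matrix σ S F} (hH : WeaklySecure F H (Subtype.val ⁻¹' A))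
    (hle : (rowSpace F G).map (LinearMap.funLeft F F ((↑) : S → ι)) ≤ rowSpace F H)
    {i : ι} (hi : i ∈ S) (hiA : i ∉ A) {u : ι → F} (hu : ∀ j, u j ≠ 0 → j ∈ A) :
    u + Pi.single i 1 ∉ rowSpace F G := by
  intro hmem
  refine hH ⟨i, hi⟩ hiA (S.domRestrict u) (fun j hj => hu j hj) ?_
  convert hle (Submodule.mem_map_of_mem hmem)
  ext j
  simp [Pi.single_apply, Subtype.ext_iff]

end RowSpace

section Decoding

variable {ι ρ σ β γ δ : Type*} [Fintype ι]

def Recoverable (K : Set ι) (G : Matrix ρ ι F) (f : (ι → F) → β) : Prop :=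
  ∃ D : (ρ → F) → (K → F) → β, ∀ x, D (G *ᵥ x) (K.domRestrict x) = f x

section

variable {K : Set ι} {G : Matrix ρ ι F} {f : (ι → F) → β}

lemma recoverable_mulVec : Recoverable K G (G *ᵥ ·) :=
  ⟨fun c _ => c, fun _ => rfl⟩

lemma recoverable_mulVec_domRestrict_of_subset {S : Set ι} (hS : S ⊆ K) (M : Matrix σ S F) :
    Recoverable K G fun x => M *ᵥ S.domRestrict x :=
  ⟨fun _ s => M *ᵥ fun j => s ⟨j, hS j.2⟩, fun _ => rfl⟩

lemma Recoverable.congr {g : (ι → F) → β} (h : Recoverable K G f) (hfg : ∀ x, f x = g x) :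
    Recoverable K G g :=
  let ⟨D, hD⟩ := h
  ⟨D, fun x => (hD x).trans (hfg x)⟩

lemma Recoverable.map (h : Recoverable K G f) (φ : β → γ) : Recoverable K G fun x => φ (f x) :=
  let ⟨D, hD⟩ := h
  ⟨fun c s => φ (D c s), fun x => congrArg φ (hD x)⟩

lemma Recoverable.map₂ {g : (ι → F) → γ} (hf : Recoverable K G f) (hg : Recoverable K G g)
    (φ : β → γ → δ) : Recoverable K G fun x => φ (f x) (g x) :=
  let ⟨D, hD⟩ := hf
  let ⟨E, hE⟩ := hg
  ⟨fun c s => φ (D c s) (E c s), fun x => congrArg₂ φ (hD x) (hE x)⟩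

lemma Recoverable.cancel_padVec {S T : Set ι} {L l n : ℕ} {M : Matrix (Fin l) S F}
    {N : Matrix (Fin n) T F}
    (h : Recoverable K G fun x => padVec L (M *ᵥ S.domRestrict x) + padVec L (N *ᵥ T.domRestrict x))
    (hT : T ⊆ K) (hl : l ≤ L) : Recoverable K G fun x => M *ᵥ S.domRestrict x :=
  (h.map₂ (recoverable_mulVec_domRestrict_of_subset hT N)
    fun c y r => c (Fin.castLE hl r) - padVec L y (Fin.castLE hl r)).congr fun x => by
      ext r
      simp [padVec_castLE]

end

lemma Recoverable.apply_of_validCode_subK {K : ι → Set ι} {G : Matrix ρ ι F} {S : Set ι}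
    {H : Matrix σ S F} (hH : ValidCode F (subK K S) H) {i : ι} (hi : i ∈ S)
    (h : Recoverable (K i) G fun x => H *ᵥ S.domRestrict x) : Recoverable (K i) G fun x => x i :=
  let ⟨D, hD⟩ := h
  let ⟨E, hE⟩ := hH ⟨i, hi⟩
  ⟨fun c s => E (D c s) fun j => s ⟨j, j.2⟩,
    fun x => (congrArg (E · _) (hD x)).trans (hE (S.domRestrict x))⟩

lemma ValidCode.submatrix {K : ι → Set ι} {G : Matrix ρ ι F} (h : ValidCode F K G) (e : σ ≃ ρ) :
    ValidCode F K (G.submatrix e id) := by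
  intro i
  obtain ⟨D, hD⟩ := h i
  refine ⟨fun c s => D (c ∘ e.symm) s, fun x => ?_⟩
  have hcode : (G.submatrix e id *ᵥ x) ∘ e.symm = G *ᵥ x := by
    ext r
    simp [mulVec, dotProduct]
  exact (congrArg (D · _) hcode).trans (hD x)

end Decoding

section Lengths

variable {ι ρ σ : Type*} {P1 P2 : Set ι}

lemma twoSenderForm_of_sum {G : Matrix (ρ ⊕ σ) ι F} (hP2 : ∀ r, ∀ j ∈ P2, G (inl r) j = 0)
    (hP1 : ∀ r, ∀ j ∈ P1, G (inr r) j = 0) : TwoSenderForm F P1 P2 G := by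
  refine ⟨Set.range inl, ?_, ?_⟩
  · rintro _ ⟨r, rfl⟩
    exact hP2 r
  · rintro (r | r) hr
    exacts [absurd ⟨r, rfl⟩ hr, hP1 r]

lemma TwoSenderForm.submatrix {G : Matrix ρ ι F} (h : TwoSenderForm F P1 P2 G) (f : σ → ρ) :
    TwoSenderForm F P1 P2 (G.submatrix f id) :=
  let ⟨S, hS, hSc⟩ := h
  ⟨f ⁻¹' S, fun r hr => hS (f r) hr, fun r hr => hSc (f r) hr⟩

lemma add_mem_twoLens [Fintype ι] {K : ι → Set ι} {A : Set ι} {a b : ℕ}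
    {G : Matrix (Fin a ⊕ Fin b) ι F} (hP2 : ∀ r, ∀ j ∈ P2, G (inl r) j = 0)
    (hP1 : ∀ r, ∀ j ∈ P1, G (inr r) j = 0) (hv : ValidCode F K G) (hs : WeaklySecure F G A) :
    a + b ∈ twoLens F P1 P2 K A :=
  ⟨G.submatrix finSumFinEquiv.symm id, (twoSenderForm_of_sum hP2 hP1).submatrix _,
    hv.submatrix _, hs.mono (rowSpace_submatrix_le G _)⟩

end Lengths

section SumCode

variable {ι κ : Type*} {P1 P2 P12 : Set ι} {l1 l2 l12 : ℕ}
  (G1 : Matrix (Fin l1) P1 F) (G2 : Matrix (Fin l2) P2 F) (G12 : Matrix (Fin l12) P12 F)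

def twoSenderSumCode : Matrix (Fin (max l1 l12) ⊕ Fin l2) ι F :=
  fromRows
    (padMat F (max l1 l12) (extendCols F P1 G1) + padMat F (max l1 l12) (extendCols F P12 G12))
    (extendCols F P2 G2)

lemma twoSenderSumCode_inl_apply_eq_zero (h12 : Disjoint P1 P2) (h212 : Disjoint P2 P12)
    (r : Fin (max l1 l12)) {j : ι} (hj : j ∈ P2) : twoSenderSumCode G1 G2 G12 (inl r) j = 0 := by
  simp [twoSenderSumCode, padMat, extendCols_apply_of_notMem _ _ (h12.notMem_of_mem_right hj),
    extendCols_apply_of_notMem _ _ (h212.notMem_of_mem_left hj)]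

lemma twoSenderSumCode_inr_apply_eq_zero (h12 : Disjoint P1 P2) (r : Fin l2) {j : ι}
    (hj : j ∈ P1) : twoSenderSumCode G1 G2 G12 (inr r) j = 0 :=
  extendCols_apply_of_notMem G2 r (h12.notMem_of_mem_left hj)

lemma twoSenderSumCode_mulVec [Fintype ι] (x : ι → F) :
    twoSenderSumCode G1 G2 G12 *ᵥ x =
      Sum.elim (padVec _ (G1 *ᵥ P1.domRestrict x) + padVec _ (G12 *ᵥ P12.domRestrict x))
        (G2 *ᵥ P2.domRestrict x) := by
  simp only [twoSenderSumCode, fromRows_mulVec, add_mulVec, padMat_mulVec, extendCols_mulVec]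

lemma twoSenderSumCode_submatrix (f : κ → ι) :
    (twoSenderSumCode G1 G2 G12).submatrix id f =
      fromRows (padMat F _ ((extendCols F P1 G1).submatrix id f) +
          padMat F _ ((extendCols F P12 G12).submatrix id f))
        ((extendCols F P2 G2).submatrix id f) := by
  ext (r | r) j <;> rfl

theorem validCode_twoSenderSumCode [Fintype ι] {K : ι → Set ι}
    (hcov : P1 ∪ P2 ∪ P12 = Set.univ) (hfull1 : ∀ i ∈ P1, P12 ⊆ K i)
    (hfull2 : ∀ j ∈ P12, P1 ⊆ K j) (hG1v : ValidCode F (subK K P1) G1)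
    (hG2v : ValidCode F (subK K P2) G2) (hG12v : ValidCode F (subK K P12) G12) :
    ValidCode F K (twoSenderSumCode G1 G2 G12) := by
  intro i
  have hsender1 : Recoverable (K i) (twoSenderSumCode G1 G2 G12) fun x =>
      padVec _ (G1 *ᵥ P1.domRestrict x) + padVec _ (G12 *ᵥ P12.domRestrict x) :=
    (recoverable_mulVec.map (· ∘ inl)).congr fun x => by rw [twoSenderSumCode_mulVec]; rfl
  have hsender2 : Recoverable (K i) (twoSenderSumCode G1 G2 G12) fun x =>
      G2 *ᵥ P2.domRestrict x :=
    (recoverable_mulVec.map (· ∘ inr)).congr fun x => by rw [twoSenderSumCode_mulVec]; rfl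
  have hi : i ∈ P1 ∪ P2 ∪ P12 := hcov ▸ Set.mem_univ i
  rcases hi with (hi | hi) | hi
  · exact (hsender1.cancel_padVec (hfull1 i hi) (le_max_left _ _)).apply_of_validCode_subK hG1v hi
  · exact hsender2.apply_of_validCode_subK hG2v hi
  · exact ((hsender1.congr fun x => add_comm _ _).cancel_padVec (hfull2 i hi)
      (le_max_right _ _)).apply_of_validCode_subK hG12v hi

theorem weaklySecure_twoSenderSumCode {A : Set ι} (hcov : P1 ∪ P2 ∪ P12 = Set.univ)
    (h12 : Disjoint P1 P2) (h112 : Disjoint P1 P12) (h212 : Disjoint P2 P12)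
    (hG1s : WeaklySecure F G1 (Subtype.val ⁻¹' A)) (hG2s : WeaklySecure F G2 (Subtype.val ⁻¹' A))
    (hG12s : WeaklySecure F G12 (Subtype.val ⁻¹' A)) :
    WeaklySecure F (twoSenderSumCode G1 G2 G12) A := by
  intro i hiA u hu
  have hi : i ∈ P1 ∪ P2 ∪ P12 := hcov ▸ Set.mem_univ i
  rcases hi with (hi | hi) | hi
  · refine add_single_notMem_rowSpace_of_map_le hG1s ?_ hi hiA hu
    rw [map_funLeft_rowSpace, twoSenderSumCode_submatrix, extendCols_submatrix_val,
      extendCols_submatrix_of_disjoint h112.symm, extendCols_submatrix_of_disjoint h12.symm,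
      padMat_zero, add_zero, rowSpace_fromRows, rowSpace_zero, sup_bot_eq]
    exact rowSpace_padMat_le _ _
  · refine add_single_notMem_rowSpace_of_map_le hG2s ?_ hi hiA hu
    rw [map_funLeft_rowSpace, twoSenderSumCode_submatrix, extendCols_submatrix_val,
      extendCols_submatrix_of_disjoint h12, extendCols_submatrix_of_disjoint h212.symm,
      padMat_zero, padMat_zero, add_zero, rowSpace_fromRows, rowSpace_zero, bot_sup_eq]
  · refine add_single_notMem_rowSpace_of_map_le hG12s ?_ hi hiA hu
    rw [map_funLeft_rowSpace, twoSenderSumCode_submatrix, extendCols_submatrix_val,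
      extendCols_submatrix_of_disjoint h112, extendCols_submatrix_of_disjoint h212,
      padMat_zero, zero_add, rowSpace_fromRows, rowSpace_zero, sup_bot_eq]
    exact rowSpace_padMat_le _ _

theorem max_add_mem_twoLens [Fintype ι] {K : ι → Set ι} {A : Set ι}
    (hcov : P1 ∪ P2 ∪ P12 = Set.univ)
    (h12 : Disjoint P1 P2) (h112 : Disjoint P1 P12) (h212 : Disjoint P2 P12)
    (hfull1 : ∀ i ∈ P1, P12 ⊆ K i) (hfull2 : ∀ j ∈ P12, P1 ⊆ K j)
    (hG1v : ValidCode F (subK K P1) G1) (hG1s : WeaklySecure F G1 (Subtype.val ⁻¹' A))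
    (hG2v : ValidCode F (subK K P2) G2) (hG2s : WeaklySecure F G2 (Subtype.val ⁻¹' A))
    (hG12v : ValidCode F (subK K P12) G12) (hG12s : WeaklySecure F G12 (Subtype.val ⁻¹' A)) :
    max l1 l12 + l2 ∈ twoLens F P1 P2 K A :=
  add_mem_twoLens (fun r _ => twoSenderSumCode_inl_apply_eq_zero G1 G2 G12 h12 h212 r)
    (fun r _ => twoSenderSumCode_inr_apply_eq_zero G1 G2 G12 h12 r)
    (validCode_twoSenderSumCode G1 G2 G12 hcov hfull1 hfull2 hG1v hG2v hG12v)
    (weaklySecure_twoSenderSumCode G1 G2 G12 hcov h12 h112 h212 hG1s hG2s hG12s)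

end SumCode

end

theorem caseIIC_code {m l1 l2 l12 : ℕ}
    (P1 P2 P12 : Set (Fin m))
    (h12 : Disjoint P1 P2) (h112 : Disjoint P1 P12) (h212 : Disjoint P2 P12)
    (hcov : P1 ∪ P2 ∪ P12 = Set.univ)
    (K : Fin m → Set (Fin m))
    (hfull1 : ∀ i ∈ P1, P12 ⊆ K i)
    (hfull2 : ∀ j ∈ P12, P1 ⊆ K j)
    (A : Set (Fin m))
    (G1 : Matrix (Fin l1) ↥P1 F) (G2 : Matrix (Fin l2) ↥P2 F)
    (G12 : Matrix (Fin l12) ↥P12 F)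
    (hG1v : ValidCode F (subK K P1) G1)
    (hG1s : WeaklySecure F G1 (Subtype.val ⁻¹' A))
    (hG2v : ValidCode F (subK K P2) G2)
    (hG2s : WeaklySecure F G2 (Subtype.val ⁻¹' A))
    (hG12v : ValidCode F (subK K P12) G12)
    (hG12s : WeaklySecure F G12 (Subtype.val ⁻¹' A)) :
    let G : Matrix (Fin (max l1 l12) ⊕ Fin l2) (Fin m) F :=
      Matrix.of (Sum.elim
        (fun r => (padMat F (max l1 l12) (extendCols F P1 G1) +
          padMat F (max l1 l12) (extendCols F P12 G12)) r)
        (fun r => extendCols F P2 G2 r))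
    (∀ r : Fin (max l1 l12), ∀ j ∈ P2, G (Sum.inl r) j = 0) ∧
    (∀ r : Fin l2, ∀ j ∈ P1, G (Sum.inr r) j = 0) ∧
    ValidCode F K G ∧ WeaklySecure F G A ∧
    sInf (twoLens F P1 P2 K A) ≤
      max (sInf (oneLens F (subK K P12) (Subtype.val ⁻¹' A)))
          (sInf (oneLens F (subK K P1) (Subtype.val ⁻¹' A))) +
        sInf (oneLens F (subK K P2) (Subtype.val ⁻¹' A)) := by
  intro G
  refine ⟨fun r _ => twoSenderSumCode_inl_apply_eq_zero G1 G2 G12 h12 h212 r,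
    fun r _ => twoSenderSumCode_inr_apply_eq_zero G1 G2 G12 h12 r,
    validCode_twoSenderSumCode G1 G2 G12 hcov hfull1 hfull2 hG1v hG2v hG12v,
    weaklySecure_twoSenderSumCode G1 G2 G12 hcov h12 h112 h212 hG1s hG2s hG12s, ?_⟩
  obtain ⟨H1, hH1v, hH1s⟩ := Nat.sInf_mem (s := oneLens F (subK K P1) _) ⟨l1, G1, hG1v, hG1s⟩
  obtain ⟨H2, hH2v, hH2s⟩ := Nat.sInf_mem (s := oneLens F (subK K P2) _) ⟨l2, G2, hG2v, hG2s⟩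
  obtain ⟨H12, hH12v, hH12s⟩ :=
    Nat.sInf_mem (s := oneLens F (subK K P12) _) ⟨l12, G12, hG12v, hG12s⟩
  rw [max_comm]
  exact Nat.sInf_le (max_add_mem_twoLens H1 H2 H12 hcov h12 h112 h212 hfull1 hfull2
    hH1v hH1s hH2v hH2s hH12v hH12s)
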